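/- On the set U_d = {(x_1,...,x_{d-1}) ∈ ℝ^{d-1} : x_i > 0 and F^{(i)}(x_1,...,x_i) > 0 for all 1 ≤ i ≤ d-1}, defining x_d, x_{d+1}, x_{d+2} by the recurrence F^{(d)}(x_i,...,x_{i+d-1}) = 0, one has the identity √(x_1 x_2 ⋯ x_{d+2}) = (x_1 x_2 ⋯ x_{d-1} · F[1,d-1]) / (F[1,d-2] · F[2,d-1]). -/
import Mathlib


/-- The polynomial `F^{(n)}`, with
`F^{(n)}(x_1,...,x_n) = F^{(n-1)}(x_1,...,x_{n-1}) - x_n F^{(n-2)}(x_1,...,x_{n-2})`,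
`F^{(0)} = F^{(-1)} = 1`. -/
def Frec : ℕ → (ℕ → ℝ) → ℝ
  | 0, _ => 1
  | 1, x => 1 - x 1
  | (n + 2), x => Frec (n + 1) x - x (n + 2) * Frec n x

/-- `FF x i j = F[i,j] = F^{(j-i+1)}(x_i, ..., x_j)`, with `F[i,j] = 1` for `j < i`. -/
def FF (x : ℕ → ℝ) (i j : ℕ) : ℝ := Frec (j + 1 - i) (fun k => x (i + k - 1))

lemma FF_of_lt (x : ℕ → ℝ) (i j : ℕ) (h : j < i) : FF x i j = 1 := by
  unfold FF; rw [show j + 1 - i = 0 by omega]; rfl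

lemma FF_diag (x : ℕ → ℝ) (i : ℕ) : FF x i i = 1 - x i := by
  unfold FF; rw [show i + 1 - i = 1 by omega]; rfl

lemma FF_succ (x : ℕ → ℝ) (i j : ℕ) (hi : 1 ≤ i) (hij : i ≤ j + 1) :
    FF x i (j + 1) = FF x i j - x (j + 1) * FF x i (j - 1) := by
  rcases eq_or_lt_of_le hij with h | h
  · subst h
    rw [FF_diag, FF_of_lt x (j+1) j (by omega), FF_of_lt x (j+1) (j-1) (by omega)]
    ring
  · obtain ⟨m, rfl⟩ : ∃ m, j = i + m := ⟨j - i, by omega⟩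
    unfold FF
    rw [show i + m + 1 + 1 - i = m + 2 by omega,
        show i + m + 1 - i = m + 1 by omega,
        show i + m - 1 + 1 - i = m by omega]
    show Frec (m + 1) _ - x (i + (m + 2) - 1) * Frec m _ = _
    rw [show i + (m + 2) - 1 = i + m + 1 by omega]

lemma FF_succ' (x : ℕ → ℝ) (i j : ℕ) (hi : 1 ≤ i) (hij : i ≤ j + 2) :
    FF x i (j + 2) = FF x i (j + 1) - x (j + 2) * FF x i j :=
  FF_succ x i (j + 1) hi hij

lemma FF_left (x : ℕ → ℝ) (i : ℕ) (hi : 1 ≤ i) :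
    ∀ j, i ≤ j → FF x i j = FF x (i + 1) j - x i * FF x (i + 2) j := by
  intro j
  induction j using Nat.strong_induction_on with
  | _ j IH =>
    intro hij
    by_cases h1 : j = i
    · subst h1
      rw [FF_diag, FF_of_lt x (j+1) j (by omega), FF_of_lt x (j+2) j (by omega)]
      ring
    · by_cases h2 : j = i + 1
      · subst h2
        rw [FF_succ x i i hi (by omega), FF_diag, FF_of_lt x i (i-1) (by omega),
          FF_diag, FF_of_lt x (i+2) (i+1) (by omega)]
        ring
      · obtain ⟨j', rfl⟩ : ∃ j', j = j' + 1 := ⟨j - 1, by omega⟩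
        rw [FF_succ x i j' hi (by omega), FF_succ x (i+1) j' (by omega) (by omega),
            FF_succ x (i+2) j' (by omega) (by omega),
            IH j' (by omega) (by omega), IH (j' - 1) (by omega) (by omega)]
        ring

lemma FF_det (x : ℕ → ℝ) (i : ℕ) (hi : 1 ≤ i) :
    ∀ j, i ≤ j → FF x i j * FF x (i + 1) (j - 1) - FF x i (j - 1) * FF x (i + 1) j
      = -(∏ k ∈ Finset.Icc i j, x k) := by
  intro j
  induction j using Nat.strong_induction_on with
  | _ j IH =>
    intro hij
    by_cases h1 : j = i
    · subst h1
      rw [FF_diag, FF_of_lt x (j+1) (j-1) (by omega), FF_of_lt x j (j-1) (by omega),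
        FF_of_lt x (j+1) j (by omega), Finset.Icc_self, Finset.prod_singleton]
      ring
    · obtain ⟨j', rfl⟩ : ∃ j', j = j' + 1 := ⟨j - 1, by omega⟩
      have hij' : i ≤ j' := by omega
      simp only [Nat.add_sub_cancel]
      rw [FF_succ x i j' hi (by omega), FF_succ x (i+1) j' (by omega) (by omega),
        Finset.prod_Icc_succ_top (by omega : i ≤ j' + 1)]
      linear_combination (x (j' + 1)) * (IH j' (by omega) hij')


/-- On `U_d = {(x_1,...,x_{d-1}) : x_i > 0, F^{(i)}(x_1,...,x_i) > 0 for 1 ≤ i ≤ d-1}`,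
with `x_d, x_{d+1}, x_{d+2}` defined by the recurrence `F^{(d)}(x_i,...,x_{i+d-1}) = 0`
(for `i = 1, 2, 3`), one has
`√(x_1 x_2 ⋯ x_{d+2}) = (x_1 ⋯ x_{d-1} · F[1,d-1]) / (F[1,d-2] · F[2,d-1])`. -/
theorem sqrt_product_formula (d : ℕ) (hd : 2 ≤ d) (x : ℕ → ℝ)
    (hpos : ∀ i, 1 ≤ i → i ≤ d - 1 → 0 < x i)
    (hFpos : ∀ i, 1 ≤ i → i ≤ d - 1 → 0 < FF x 1 i)
    (hrec : ∀ i, 1 ≤ i → i ≤ 3 → Frec d (fun k => x (i + k - 1)) = 0) :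
    Real.sqrt (∏ k ∈ Finset.Icc 1 (d + 2), x k) =
      (∏ k ∈ Finset.Icc 1 (d - 1), x k) * FF x 1 (d - 1) /
        (FF x 1 (d - 2) * FF x 2 (d - 1)) := by
  obtain ⟨e, rfl⟩ : ∃ e, d = e + 2 := ⟨d - 2, by omega⟩
  simp only [show e + 2 - 1 = e + 1 from rfl, show e + 2 - 2 = e from rfl] at hpos hFpos ⊢
  -- the three recurrence vanishing conditions
  have h01 : FF x 1 (e + 2) = 0 := hrec 1 (by norm_num) (by norm_num)
  have h02 : FF x 2 (e + 3) = 0 := hrec 2 (by norm_num) (by norm_num)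
  have h03 : FF x 3 (e + 4) = 0 := hrec 3 (by norm_num) (by norm_num)
  -- positivity facts
  have hx1 : 0 < x 1 := hpos 1 le_rfl (by omega)
  have hA : 0 < FF x 1 (e + 1) := hFpos (e + 1) (by omega) le_rfl
  have hB : 0 < FF x 1 e := by
    rcases Nat.eq_zero_or_pos e with rfl | he
    · rw [FF_of_lt x 1 0 (by omega)]; norm_num
    · exact hFpos e he (by omega)
  have hprodpos : ∀ j, j ≤ e + 1 → 0 < ∏ k ∈ Finset.Icc 1 j, x k := by
    intro j h2
    apply Finset.prod_pos
    intro k hk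
    simp only [Finset.mem_Icc] at hk
    exact hpos k hk.1 (by omega)
  have hG : ∀ j, j ≤ e + 1 → 0 < FF x 2 j := by
    intro j
    induction j using Nat.strong_induction_on with
    | _ j IH =>
      intro hj
      rcases lt_or_ge j 2 with h | h
      · rw [FF_of_lt x 2 j h]; norm_num
      · obtain ⟨j', rfl⟩ : ∃ j', j = j' + 1 := ⟨j - 1, by omega⟩
        have hdet : FF x 1 (j' + 1) * FF x 2 j' - FF x 1 j' * FF x 2 (j' + 1)
            = -(∏ k ∈ Finset.Icc 1 (j' + 1), x k) := FF_det x 1 le_rfl (j' + 1) (by omega)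
        have h1 : 0 < FF x 1 (j' + 1) := hFpos (j' + 1) (by omega) (by omega)
        have h2 : 0 < FF x 1 j' := hFpos j' (by omega) (by omega)
        have h3 : 0 < FF x 2 j' := IH j' (by omega) (by omega)
        have h4 : 0 < ∏ k ∈ Finset.Icc 1 (j' + 1), x k := hprodpos _ hj
        nlinarith [hdet, mul_pos h1 h3]
  have hC : 0 < FF x 2 (e + 1) := hG (e + 1) le_rfl
  have hP : 0 < ∏ k ∈ Finset.Icc 1 (e + 1), x k := hprodpos _ le_rfl
  have hQ : 0 < ∏ k ∈ Finset.Icc 2 (e + 1), x k := by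
    apply Finset.prod_pos
    intro k hk
    simp only [Finset.mem_Icc] at hk
    exact hpos k (by omega) hk.2
  -- recurrence facts
  have f1 : FF x 1 (e + 2) = FF x 1 (e + 1) - x (e + 2) * FF x 1 e :=
    FF_succ' x 1 e le_rfl (by omega)
  have f2 : FF x 2 (e + 2) = FF x 2 (e + 1) - x (e + 2) * FF x 2 e :=
    FF_succ' x 2 e (by omega) (by omega)
  have f3 : FF x 2 (e + 3) = FF x 2 (e + 2) - x (e + 3) * FF x 2 (e + 1) :=
    FF_succ' x 2 (e + 1) (by omega) (by omega)
  have f7 : FF x 3 (e + 3) = FF x 3 (e + 2) - x (e + 3) * FF x 3 (e + 1) :=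
    FF_succ' x 3 (e + 1) (by omega) (by omega)
  have f8 : FF x 3 (e + 4) = FF x 3 (e + 3) - x (e + 4) * FF x 3 (e + 2) :=
    FF_succ' x 3 (e + 2) (by omega) (by omega)
  have f4 : FF x 1 (e + 1) * FF x 2 e - FF x 1 e * FF x 2 (e + 1)
      = -(∏ k ∈ Finset.Icc 1 (e + 1), x k) := FF_det x 1 le_rfl (e + 1) (by omega)
  have f6det : FF x 2 (e + 2) * FF x 3 (e + 1) - FF x 2 (e + 1) * FF x 3 (e + 2)
      = -(∏ k ∈ Finset.Icc 2 (e + 2), x k) := FF_det x 2 (by omega) (e + 2) (by omega)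
  have f5 : FF x 1 (e + 1) = FF x 2 (e + 1) - x 1 * FF x 3 (e + 1) :=
    FF_left x 1 le_rfl (e + 1) (by omega)
  -- product splitting
  have p1 : (∏ k ∈ Finset.Icc 1 (e + 1), x k) = x 1 * ∏ k ∈ Finset.Icc 2 (e + 1), x k := by
    rw [show Finset.Icc 1 (e + 1) = insert 1 (Finset.Icc 2 (e + 1)) by
      ext k; simp only [Finset.mem_Icc, Finset.mem_insert]; omega]
    rw [Finset.prod_insert (by simp)]
  have p2 : (∏ k ∈ Finset.Icc 2 (e + 2), x k)
      = (∏ k ∈ Finset.Icc 2 (e + 1), x k) * x (e + 2) :=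
    Finset.prod_Icc_succ_top (by omega) x
  have s1 : (∏ k ∈ Finset.Icc 1 (e + 4), x k)
      = (∏ k ∈ Finset.Icc 1 (e + 3), x k) * x (e + 4) := Finset.prod_Icc_succ_top (by omega) x
  have s2 : (∏ k ∈ Finset.Icc 1 (e + 3), x k)
      = (∏ k ∈ Finset.Icc 1 (e + 2), x k) * x (e + 3) := Finset.prod_Icc_succ_top (by omega) x
  have s3 : (∏ k ∈ Finset.Icc 1 (e + 2), x k)
      = (∏ k ∈ Finset.Icc 1 (e + 1), x k) * x (e + 2) := Finset.prod_Icc_succ_top (by omega) x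
  -- derived algebraic facts
  have g1 : x (e + 2) * FF x 1 e = FF x 1 (e + 1) := by linear_combination f1 - h01
  have m0 : FF x 1 e * FF x 2 (e + 2) = ∏ k ∈ Finset.Icc 1 (e + 1), x k := by
    linear_combination (FF x 1 e) * f2 - (FF x 2 e) * g1 - f4
  have g2 : x (e + 3) * (FF x 1 e * FF x 2 (e + 1)) = ∏ k ∈ Finset.Icc 1 (e + 1), x k := by
    linear_combination (FF x 1 e) * f3 - (FF x 1 e) * h02 + (FF x 1 e) * f2
      - (FF x 2 e) * g1 - f4
  have m1 : FF x 1 e * FF x 2 (e + 1) * FF x 3 (e + 2)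
      = (∏ k ∈ Finset.Icc 2 (e + 1), x k) * FF x 2 (e + 1) := by
    linear_combination (-(FF x 1 e)) * f6det + (FF x 1 e) * p2 + (FF x 3 (e + 1)) * m0
      + (∏ k ∈ Finset.Icc 2 (e + 1), x k) * g1 + (FF x 3 (e + 1)) * p1
      + (∏ k ∈ Finset.Icc 2 (e + 1), x k) * f5
  have m2 : FF x 1 e * FF x 2 (e + 1) * FF x 3 (e + 3)
      = (∏ k ∈ Finset.Icc 2 (e + 1), x k) * FF x 1 (e + 1) := by
    linear_combination (FF x 1 e * FF x 2 (e + 1)) * f7 + m1 - (FF x 3 (e + 1)) * g2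
      - (FF x 3 (e + 1)) * p1 - (∏ k ∈ Finset.Icc 2 (e + 1), x k) * f5
  have g3eq : (x (e + 4) * FF x 2 (e + 1) - FF x 1 (e + 1))
      * (∏ k ∈ Finset.Icc 2 (e + 1), x k) = 0 := by
    linear_combination (-(x (e + 4))) * m1 + (FF x 1 e * FF x 2 (e + 1)) * f8
      - (FF x 1 e * FF x 2 (e + 1)) * h03 + m2
  have g3 : x (e + 4) * FF x 2 (e + 1) = FF x 1 (e + 1) := by
    rcases mul_eq_zero.1 g3eq with h | h
    · linarith [h]
    · exact absurd h (ne_of_gt hQ)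
  -- final computation
  have ha : x (e + 2) = FF x 1 (e + 1) / FF x 1 e := by
    rw [eq_div_iff hB.ne']; linarith [g1]
  have hb : x (e + 3) = (∏ k ∈ Finset.Icc 1 (e + 1), x k) / (FF x 1 e * FF x 2 (e + 1)) := by
    rw [eq_div_iff (mul_pos hB hC).ne']; exact g2
  have hc : x (e + 4) = FF x 1 (e + 1) / FF x 2 (e + 1) := by
    rw [eq_div_iff hC.ne']; exact g3
  have key : (∏ k ∈ Finset.Icc 1 (e + 4), x k)
      = ((∏ k ∈ Finset.Icc 1 (e + 1), x k) * FF x 1 (e + 1)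
        / (FF x 1 e * FF x 2 (e + 1))) ^ 2 := by
    rw [show e + 2 + 2 = e + 4 from rfl] at *
    rw [s1, s2, s3, ha, hb, hc]
    field_simp
  rw [show e + 2 + 2 = e + 4 from rfl, key,
    Real.sqrt_sq (le_of_lt (div_pos (mul_pos hP hA) (mul_pos hB hC)))]
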